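/- arXiv:2110.10725 — 3 statements merged into one kernel-verified Lean document; each statement's English description precedes it below -/
import Mathlib

section
/- Let U be the multi-slice in [m]^n determined by a vector k = (k₁,…,k_m) of nonnegative integers summing to n (vectors with exactly k_j coordinates equal to j). A function f : U → ℝ is a J-junta (depends only on coordinates in J ⊆ [n]) if and only if f(π·x) = f(x) for every permutation π ∈ S_n fixing J pointwise and every x ∈ U. -/
/-- The action of `S_n` on `[m]^n` permuting coordinates: `(π·x)_i = x_{π(i)}`. -/
def act {n m : ℕ} (π : Equiv.Perm (Fin n)) (x : Fin n → Fin m) : Fin n → Fin m :=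
  fun i => x (π i)

/-- Membership in the multi-slice `U_k ⊆ [m]^n`: exactly `k j` coordinates equal `j`. -/
def inSlice {n m : ℕ} (k : Fin m → ℕ) (x : Fin n → Fin m) : Prop :=
  ∀ j, (Finset.univ.filter fun i => x i = j).card = k j

/-!
Two points of the multi-slice with the same restriction to `J` also have, for each value `j`,
the same number of coordinates outside `J` equal to `j`; matching these fibres bijectively gives
a permutation fixing `J` pointwise that carries one point to the other. So invariance under the
pointwise stabiliser of `J` says exactly that `f` factors through the restriction `x ↦ x_J`.
-/

open Finset Function

section FiberCount

variable {ι α : Type*} [Fintype ι] [DecidableEq α]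

theorem Equiv.Perm.exists_comp_eq_of_card_fiber_eq {x y : ι → α}
    (h : ∀ a, Fintype.card {i // x i = a} = Fintype.card {i // y i = a}) :
    ∃ σ : Equiv.Perm ι, ∀ i, y (σ i) = x i :=
  ⟨Equiv.ofFiberEquiv fun a => Fintype.equivOfCardEq (h a), Equiv.ofFiberEquiv_map _⟩

theorem card_filter_not_eq_of_eqOn {p : ι → Prop} [DecidablePred p] {x y : ι → α}
    (hp : ∀ i, p i → x i = y i) {a : α} (h : #{i | x i = a} = #{i | y i = a}) :
    #{i | ¬p i ∧ x i = a} = #{i | ¬p i ∧ y i = a} := by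
  have hx := card_filter_add_card_filter_not (s := {i | x i = a}) p
  have hy := card_filter_add_card_filter_not (s := {i | y i = a}) p
  have hon : (univ.filter fun i => x i = a ∧ p i) = univ.filter fun i => y i = a ∧ p i :=
    filter_congr fun i _ => and_congr_left fun hpi => by rw [hp i hpi]
  simp only [filter_filter, hon] at hx hy
  simp only [and_comm (a := ¬p _)]
  omega

theorem Equiv.Perm.exists_fixing_comp_eq_of_card_fiber_eq {p : ι → Prop} [DecidablePred p]
    {x y : ι → α} (hp : ∀ i, p i → x i = y i) (h : ∀ a, #{i | x i = a} = #{i | y i = a}) :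
    ∃ σ : Equiv.Perm ι, (∀ i, p i → σ i = i) ∧ ∀ i, y (σ i) = x i := by
  obtain ⟨τ, hτ⟩ := exists_comp_eq_of_card_fiber_eq (x := fun i : {i // ¬p i} => x i)
    (y := fun i => y i) fun a => by
      rw [Fintype.card_congr (subtypeSubtypeEquivSubtypeInter (¬p ·) (x · = a)),
        Fintype.card_congr (subtypeSubtypeEquivSubtypeInter (¬p ·) (y · = a)),
        Fintype.card_subtype, Fintype.card_subtype]
      exact card_filter_not_eq_of_eqOn hp (h a)
  refine ⟨ofSubtype τ, fun i hi => ofSubtype_apply_of_not_mem τ (not_not.mpr hi), fun i => ?_⟩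
  by_cases hi : p i
  · rw [ofSubtype_apply_of_not_mem τ (not_not.mpr hi), hp i hi]
  · rw [ofSubtype_apply_of_mem τ hi]
    exact hτ ⟨i, hi⟩

end FiberCount

section Slice

variable {n m : ℕ}

theorem card_filter_act_eq (π : Equiv.Perm (Fin n)) (x : Fin n → Fin m) (j : Fin m) :
    #{i | act π x i = j} = #{i | x i = j} := by
  simp only [← Fintype.card_subtype]
  exact Fintype.card_congr (π.subtypeEquiv fun _ => Iff.rfl)

theorem inSlice_act {k : Fin m → ℕ} {x : Fin n → Fin m} (hx : inSlice k x)
    (π : Equiv.Perm (Fin n)) : inSlice k (act π x) :=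
  fun j => (card_filter_act_eq π x j).trans (hx j)

theorem inSlice.exists_perm_act_eq {k : Fin m → ℕ} {x y : Fin n → Fin m} (hx : inSlice k x)
    (hy : inSlice k y) {J : Finset (Fin n)} (hJ : ∀ i ∈ J, x i = y i) :
    ∃ π : Equiv.Perm (Fin n), (∀ i ∈ J, π i = i) ∧ act π y = x := by
  obtain ⟨π, hπJ, hπ⟩ :=
    Equiv.Perm.exists_fixing_comp_eq_of_card_fiber_eq hJ fun j => (hx j).trans (hy j).symm
  exact ⟨π, hπJ, funext hπ⟩

end Slice

theorem junta_iff_invariant_general (n m : ℕ) (k : Fin m → ℕ)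
    (J : Finset (Fin n)) (f : (Fin n → Fin m) → ℝ) :
    (∃ g : (J → Fin m) → ℝ, ∀ x, inSlice k x → f x = g (fun i => x i.1)) ↔
      (∀ π : Equiv.Perm (Fin n), (∀ i ∈ J, π i = i) →
        ∀ x, inSlice k x → f (act π x) = f x) := by
  constructor
  · rintro ⟨g, hg⟩ π hπ x hx
    rw [hg x hx, hg _ (inSlice_act hx π)]
    congr 1
    funext i
    simp only [act, hπ i.1 i.2]
  · intro hinv
    let restrict : {x // inSlice k x} → (J → Fin m) := fun x i => x.1 i.1
    have hfactor : FactorsThrough (fun x => f x.1) restrict := by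
      rintro ⟨x, hx⟩ ⟨y, hy⟩ hxy
      obtain ⟨π, hπJ, rfl⟩ := hx.exists_perm_act_eq hy fun i hi => congrFun hxy ⟨i, hi⟩
      exact hinv π hπJ y hy
    exact ⟨extend restrict (fun x => f x.1) 0, fun x hx => (hfactor.extend_apply 0 ⟨x, hx⟩).symm⟩

/-- A function on the multi-slice `U_k` is a `J`-junta (depends only on the
coordinates in `J`) iff it is invariant under every permutation fixing `J` pointwise. -/
theorem junta_iff_invariant (n m : ℕ) (k : Fin m → ℕ) (hk : ∑ j, k j = n)
    (J : Finset (Fin n)) (f : (Fin n → Fin m) → ℝ) :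
    (∃ g : (J → Fin m) → ℝ, ∀ x, inSlice k x → f x = g (fun i => x i.1)) ↔
      (∀ π : Equiv.Perm (Fin n), (∀ i ∈ J, π i = i) →
        ∀ x, inSlice k x → f (act π x) = f x) :=
  junta_iff_invariant_general n m k J f
end

section
/- Let U be a multi-slice in [m]^n for k = (k₁,…,k_m). Every real-valued function on U lies in the span of (n − k₁)-juntas; that is, V_n(U) = V_{n−k₁}(U), where V_d(U) denotes the linear span of functions depending on at most d coordinates. -/
/-- A `d`-junta on the multi-slice: a function depending on at most `d` coordinates. -/
def IsJunta {n m : ℕ} {k : Fin m → ℕ} (d : ℕ)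
    (f : {x : Fin n → Fin m // inSlice k x} → ℝ) : Prop :=
  ∃ A : Finset (Fin n), A.card ≤ d ∧
    ∀ x y : {x : Fin n → Fin m // inSlice k x},
      (∀ i ∈ A, x.1 i = y.1 i) → f x = f y

/-!
A point `x` of the multi-slice is determined by its coordinates different from `0`: the value
`0` must fill the remaining `k₀` positions. Hence the indicator of `x` is a junta on the
`n - k₀` coordinates where `x` is nonzero, and these indicators span all functions on the slice.
-/

open Finset

namespace inSlice

variable {n m : ℕ} {k : Fin m → ℕ} {x y : Fin n → Fin m}

theorem card_filter_ne (hx : inSlice k x) (j : Fin m) :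
    #{i | x i ≠ j} = n - k j := by
  have hsplit := card_filter_add_card_filter_not (s := univ) (p := fun i => x i = j)
  rw [card_univ, Fintype.card_fin, hx j] at hsplit
  simp only [ne_eq]
  omega

theorem eq_of_forall_ne_imp_eq (hx : inSlice k x) (hy : inSlice k y) {j : Fin m}
    (h : ∀ i, x i ≠ j → y i = x i) : y = x := by
  funext i
  by_contra hne
  have hxi : x i = j := by_contra fun hxi => hne (h i hxi)
  have hyi : y i ≠ j := hxi ▸ hne
  have hfiber : univ.filter (fun i' => x i' = y i) = univ.filter (fun i' => y i' = y i) := by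
    refine eq_of_subset_of_card_le (fun i' hi' => ?_) ((hy _).trans (hx _).symm).le
    simp only [mem_filter, mem_univ, true_and] at hi' ⊢
    rw [h i' (hi' ▸ hyi), hi']
  have hi : i ∈ univ.filter (fun i' => x i' = y i) := by rw [hfiber]; simp
  simp only [mem_filter, mem_univ, true_and] at hi
  exact hne hi.symm

end inSlice

theorem isJunta_single {n m : ℕ} {k : Fin m → ℕ} (x : {x : Fin n → Fin m // inSlice k x})
    (j : Fin m) : IsJunta (n - k j) (Pi.single x (1 : ℝ)) := by
  refine ⟨univ.filter (fun i => x.1 i ≠ j), (x.2.card_filter_ne j).le, fun y z hyz => ?_⟩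
  simp only [mem_filter, mem_univ, true_and] at hyz
  have hyx : y = x ↔ z = x := by
    constructor
    · rintro rfl
      exact Subtype.ext (y.2.eq_of_forall_ne_imp_eq z.2 fun i hi => (hyz i hi).symm)
    · rintro rfl
      exact Subtype.ext (z.2.eq_of_forall_ne_imp_eq y.2 hyz)
  simp only [Pi.single_apply, hyx]

theorem span_juntas_top_general (n m : ℕ) (hm : 0 < m) (k : Fin m → ℕ) :
    Submodule.span ℝ
        {f : {x : Fin n → Fin m // inSlice k x} → ℝ | IsJunta (n - k ⟨0, hm⟩) f} = ⊤ := by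
  rw [eq_top_iff, ← (Pi.basisFun ℝ _).span_eq, Submodule.span_le]
  rintro _ ⟨x, rfl⟩
  exact Submodule.subset_span (by simpa using isJunta_single x ⟨0, hm⟩)

/-- Every real-valued function on the multi-slice `U_k ⊆ [m]^n` lies in the span of
`(n − k₁)`-juntas, i.e. `V_n(U_k) = V_{n−k₁}(U_k)`. -/
theorem span_juntas_top (n m : ℕ) (hm : 0 < m) (k : Fin m → ℕ) (hk : ∑ j, k j = n) :
    Submodule.span ℝ
        {f : {x : Fin n → Fin m // inSlice k x} → ℝ | IsJunta (n - k ⟨0, hm⟩) f} = ⊤ :=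
  span_juntas_top_general n m hm k
end

section
/- Let (Ω₁,ν₁),…,(Ωₙ,νₙ) be finite probability spaces and let ν = ν₁×…×νₙ. For i = 1,…,n, let μᵢ be a probability distribution on Ωᵢ×Ωᵢ with both marginals νᵢ, and suppose the second-largest singular value of the Markov operator T_{μᵢ} on L²(Ωᵢ,νᵢ) is at most 1−β. Let T = T_{μ₁}⊗…⊗T_{μₙ}. Then for every f ∈ L²(Ωⁿ, ν) orthogonal to all functions depending on at most d coordinates, ‖Tf‖₂ ≤ (1−β)^d ‖f‖₂. -/
/-!
Split `f = ∑ S, f_S` into Efron–Stein components: `f_S` depends only on the coordinates in `S`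
and has mean zero in each of them. Components with different `S` are orthogonal, so
orthogonality of `f` to `d`-juntas forces `f_S = 0` for `|S| ≤ d`. Factor `T` into
one-coordinate operators `T_i`. Each `T_i` maps every component to itself: it fixes `f_S` when
`i ∉ S`, and when `i ∈ S` it keeps the mean in coordinate `i` zero (the marginals of `μ_i` are
`ν_i`) and, fibre by fibre, contracts by `1 - β`. Hence `‖T f_S‖ ≤ (1 - β)^|S| ‖f_S‖`, and
Pythagoras over `S` gives the bound.
-/

open Finset Function

theorem prod_apply_update {κ : Type*} [Fintype κ] [DecidableEq κ] {α : κ → Type*} {β : Type*}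
    [CommMonoid β] (F : ∀ k, α k → β) (x : ∀ k, α k) (k : κ) (a : α k) :
    ∏ j, F j (update x k a j) = F k a * ∏ j ∈ univ.erase k, F j (x j) := by
  rw [← mul_prod_erase univ _ (mem_univ k), update_self]
  exact congrArg _ (prod_congr rfl fun j hj => by rw [update_of_ne (ne_of_mem_erase hj)])

namespace TensorMarkov

structure IsStationaryKernel {α : Type*} [Fintype α] (ν : α → ℝ) (k : α → α → ℝ) : Prop where
  sum_eq_one : ∀ b, ∑ a, k a b = 1
  sum_mul_eq : ∀ a, ∑ b, ν b * k a b = ν a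

/-- `√c` bounds the second singular value of `g ↦ ∑ a, k a · * g a` on `L²(ν)`. -/
def HasGap {α : Type*} [Fintype α] (ν : α → ℝ) (k : α → α → ℝ) (c : ℝ) : Prop :=
  ∀ g : α → ℝ, ∑ a, ν a * g a = 0 → ∑ b, ν b * (∑ a, k a b * g a) ^ 2 ≤ c * ∑ a, ν a * g a ^ 2

variable {ι : Type*} [DecidableEq ι] {Ω : ι → Type*} [∀ i, Fintype (Ω i)]

section Coordinate

variable (ν : ∀ i, Ω i → ℝ)

def coordAverage (i : ι) (f : (∀ i, Ω i) → ℝ) (x : ∀ i, Ω i) : ℝ :=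
  ∑ a, ν i a * f (update x i a)

/-- `g` lies in the Efron–Stein component of `S`. -/
structure IsPureOn (S : Finset ι) (g : (∀ i, Ω i) → ℝ) : Prop where
  coordAverage_eq_zero : ∀ i ∈ S, ∀ x, coordAverage ν i g x = 0
  eq_of_eqOn : ∀ x y, (∀ i ∈ S, x i = y i) → g x = g y

def coordOp (i : ι) (k : Ω i → Ω i → ℝ) (g : (∀ i, Ω i) → ℝ) (y : ∀ i, Ω i) : ℝ :=
  ∑ a, k a (y i) * g (update y i a)

variable {i : ι} {k : Ω i → Ω i → ℝ}

theorem coordOp_eq_self (hk : ∀ b, ∑ a, k a b = 1) {g : (∀ i, Ω i) → ℝ}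
    (hg : ∀ x a, g (update x i a) = g x) : coordOp i k g = g := by
  ext y
  simp [coordOp, hg, ← sum_mul, hk]

theorem coordAverage_coordOp (hk : ∀ a, ∑ b, ν i b * k a b = ν i a) (g : (∀ i, Ω i) → ℝ)
    (x : ∀ i, Ω i) : coordAverage ν i (coordOp i k g) x = coordAverage ν i g x := by
  simp only [coordAverage, coordOp, update_self, update_idem, mul_sum]
  rw [sum_comm]
  refine sum_congr rfl fun a _ => ?_
  rw [← hk a, sum_mul]
  exact sum_congr rfl fun _ _ => by ring

theorem coordAverage_coordOp_of_ne {j : ι} (hij : i ≠ j) (k : Ω j → Ω j → ℝ)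
    (g : (∀ i, Ω i) → ℝ) (x : ∀ i, Ω i) :
    coordAverage ν i (coordOp j k g) x = coordOp j k (coordAverage ν i g) x := by
  simp only [coordAverage, coordOp, update_of_ne hij.symm, update_comm hij, mul_sum]
  rw [sum_comm]
  exact sum_congr rfl fun _ _ => sum_congr rfl fun _ _ => by ring

variable {ν}

theorem IsPureOn.update_eq {S : Finset ι} {g : (∀ i, Ω i) → ℝ} (hg : IsPureOn ν S g)
    (hi : i ∉ S) (x : ∀ i, Ω i) (a : Ω i) : g (update x i a) = g x :=
  hg.eq_of_eqOn _ _ fun _ hj => update_of_ne (ne_of_mem_of_not_mem hj hi) _ _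

theorem IsPureOn.coordOp (hk : IsStationaryKernel (ν i) k) {S : Finset ι}
    {g : (∀ i, Ω i) → ℝ} (hg : IsPureOn ν S g) :
    IsPureOn ν S (coordOp i k g) := by
  by_cases hi : i ∈ S
  · refine ⟨fun j hj x => ?_, fun x y hxy => ?_⟩
    · rcases eq_or_ne j i with rfl | hji
      · rw [coordAverage_coordOp ν hk.sum_mul_eq, hg.coordAverage_eq_zero j hj]
      · simp [coordAverage_coordOp_of_ne ν hji, TensorMarkov.coordOp,
          hg.coordAverage_eq_zero j hj]
    · simp only [TensorMarkov.coordOp, hxy i hi]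
      refine sum_congr rfl fun a _ => congrArg _ (hg.eq_of_eqOn _ _ fun j hj => ?_)
      rcases eq_or_ne j i with rfl | hji
      · simp
      · simp [update_of_ne hji, hxy j hj]
  · rwa [coordOp_eq_self hk.sum_eq_one (hg.update_eq hi)]

end Coordinate

variable [Fintype ι]

section Weighted

variable (ν : ∀ i, Ω i → ℝ)

def wInner (f g : (∀ i, Ω i) → ℝ) : ℝ := ∑ x, (∏ i, ν i (x i)) * f x * g x

def wNormSq (f : (∀ i, Ω i) → ℝ) : ℝ := ∑ x, (∏ i, ν i (x i)) * f x ^ 2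

theorem wInner_self (f : (∀ i, Ω i) → ℝ) : wInner ν f f = wNormSq ν f :=
  sum_congr rfl fun _ _ => by ring

theorem wInner_comm (f g : (∀ i, Ω i) → ℝ) : wInner ν f g = wInner ν g f :=
  sum_congr rfl fun _ _ => by ring

theorem wNormSq_nonneg {ν : ∀ i, Ω i → ℝ} (hν : ∀ i a, 0 ≤ ν i a) (f : (∀ i, Ω i) → ℝ) :
    0 ≤ wNormSq ν f :=
  sum_nonneg fun x _ => mul_nonneg (prod_nonneg fun i _ => hν i (x i)) (sq_nonneg _)

theorem wInner_sum_left {κ : Type*} (s : Finset κ) (g : κ → (∀ i, Ω i) → ℝ)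
    (h : (∀ i, Ω i) → ℝ) : wInner ν (∑ k ∈ s, g k) h = ∑ k ∈ s, wInner ν (g k) h := by
  simp only [wInner, Finset.sum_apply, mul_sum, sum_mul]
  exact sum_comm

theorem sum_mul_coordAverage {i : ι} (hν : ∑ a, ν i a = 1) (F : (∀ i, Ω i) → ℝ) :
    ∑ x, (∏ j, ν j (x j)) * coordAverage ν i F x = ∑ x, (∏ j, ν j (x j)) * F x := by
  set w : (∀ i, Ω i) → ℝ := fun x => ∏ j, ν j (x j)
  have hw (x : ∀ i, Ω i) (a : Ω i) : w (update x i a) * ν i (x i) = w x * ν i a := by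
    simp only [w, prod_apply_update (fun j => ν j),
      ← mul_prod_erase univ (fun j => ν j (x j)) (mem_univ i)]
    ring
  have hσ : Involutive fun p : (∀ j, Ω j) × Ω i => (update p.1 i p.2, p.1 i) := by
    rintro ⟨x, a⟩
    simp
  calc ∑ x, w x * coordAverage ν i F x
      = ∑ p : (∀ j, Ω j) × Ω i, w p.1 * ν i p.2 * F (update p.1 i p.2) := by
        simp only [coordAverage, Fintype.sum_prod_type, mul_sum, mul_assoc]
    _ = ∑ p : (∀ j, Ω j) × Ω i, w (update p.1 i p.2) * ν i (p.1 i) * F p.1 := by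
        rw [← Equiv.sum_comp (hσ.toPerm _)]
        simp
    _ = ∑ x, w x * F x := by
        simp only [hw, Fintype.sum_prod_type, mul_right_comm _ (ν i _), ← mul_sum, hν, mul_one]

theorem wInner_eq_zero_of_coordAverage_eq_zero {i : ι} (hν : ∑ a, ν i a = 1)
    {g h : (∀ i, Ω i) → ℝ} (hg : ∀ x, coordAverage ν i g x = 0)
    (hh : ∀ x a, h (update x i a) = h x) : wInner ν g h = 0 := by
  have hgh (x : ∀ i, Ω i) : coordAverage ν i (g * h) x = coordAverage ν i g x * h x := by
    simp only [coordAverage, Pi.mul_apply, hh, sum_mul, mul_assoc]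
  calc wInner ν g h = ∑ x, (∏ j, ν j (x j)) * (g * h) x := by
        simp only [wInner, Pi.mul_apply, mul_assoc]
    _ = 0 := by
        simp only [← sum_mul_coordAverage ν hν, hgh, hg, zero_mul, mul_zero, sum_const_zero]

theorem wNormSq_coordOp_le (hν₀ : ∀ i a, 0 ≤ ν i a) {i : ι} (hν₁ : ∑ a, ν i a = 1)
    {k : Ω i → Ω i → ℝ} {c : ℝ} (hk : HasGap (ν i) k c) {g : (∀ i, Ω i) → ℝ}
    (hg : ∀ x, coordAverage ν i g x = 0) :
    wNormSq ν (coordOp i k g) ≤ c * wNormSq ν g := by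
  have hfib (F : (∀ i, Ω i) → ℝ) :
      wNormSq ν F = ∑ x, (∏ j, ν j (x j)) * coordAverage ν i (fun y => F y ^ 2) x :=
    (sum_mul_coordAverage ν hν₁ _).symm
  rw [hfib, hfib, mul_sum]
  refine sum_le_sum fun x _ => ?_
  rw [mul_left_comm]
  refine mul_le_mul_of_nonneg_left ?_ (prod_nonneg fun j _ => hν₀ j (x j))
  simpa [coordAverage, coordOp] using hk (fun a => g (update x i a)) (hg x)

variable {ν}

theorem IsPureOn.wInner_eq_zero (hν : ∀ i, ∑ a, ν i a = 1) {S T : Finset ι}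
    {g h : (∀ i, Ω i) → ℝ} (hg : IsPureOn ν S g) (hh : IsPureOn ν T h) (hST : S ≠ T) :
    wInner ν g h = 0 := by
  obtain ⟨i, hi⟩ : ∃ i, ¬(i ∈ S ↔ i ∈ T) := by simpa [Finset.ext_iff] using hST
  by_cases hiS : i ∈ S
  · exact wInner_eq_zero_of_coordAverage_eq_zero ν (hν i) (hg.coordAverage_eq_zero i hiS)
      (hh.update_eq (by tauto))
  · rw [wInner_comm]
    exact wInner_eq_zero_of_coordAverage_eq_zero ν (hν i) (hh.coordAverage_eq_zero i (by tauto))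
      (hg.update_eq hiS)

theorem wInner_sum_of_isPureOn (hν : ∀ i, ∑ a, ν i a = 1) {g : Finset ι → (∀ i, Ω i) → ℝ}
    (hg : ∀ S, IsPureOn ν S (g S)) (S : Finset ι) :
    wInner ν (∑ T, g T) (g S) = wNormSq ν (g S) := by
  rw [wInner_sum_left, sum_eq_single S (fun T _ hTS => (hg T).wInner_eq_zero hν (hg S) hTS)
    (by simp), wInner_self]

theorem wNormSq_sum_of_isPureOn (hν : ∀ i, ∑ a, ν i a = 1) {g : Finset ι → (∀ i, Ω i) → ℝ}
    (hg : ∀ S, IsPureOn ν S (g S)) : wNormSq ν (∑ S, g S) = ∑ S, wNormSq ν (g S) := by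
  rw [← wInner_self, wInner_sum_left]
  exact sum_congr rfl fun S _ => by rw [wInner_comm, wInner_sum_of_isPureOn hν hg]

end Weighted

section Tensor

def tensorOp (K : ∀ i, Ω i → Ω i → ℝ) (f : (∀ i, Ω i) → ℝ) (y : ∀ i, Ω i) : ℝ :=
  ∑ x, (∏ i, K i (x i) (y i)) * f x

theorem tensorOp_sum {κ : Type*} (K : ∀ i, Ω i → Ω i → ℝ) (s : Finset κ)
    (g : κ → (∀ i, Ω i) → ℝ) : tensorOp K (∑ k ∈ s, g k) = ∑ k ∈ s, tensorOp K (g k) := by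
  ext y
  simp only [tensorOp, Finset.sum_apply, mul_sum]
  exact sum_comm

theorem sum_tensorOp_piecewise (K L : ∀ i, Ω i → Ω i → ℝ) (f : (∀ i, Ω i) → ℝ) :
    ∑ S : Finset ι, tensorOp (S.piecewise K L) f = tensorOp (K + L) f := by
  ext y
  have hprod (S : Finset ι) (x : ∀ i, Ω i) : ∏ i, S.piecewise K L i (x i) (y i) =
      (∏ i ∈ S, K i (x i) (y i)) * ∏ i ∈ Sᶜ, L i (x i) (y i) := by
    simp only [Finset.piecewise, ite_apply]
    rw [prod_ite]
    simp [compl_eq_univ_sdiff, sdiff_eq_filter]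
  simp only [tensorOp, Finset.sum_apply, Pi.add_apply, Fintype.prod_add, sum_mul, hprod]
  exact sum_comm

theorem tensorOp_apply_update (L : ∀ i, Ω i → Ω i → ℝ) (f : (∀ i, Ω i) → ℝ) (y : ∀ i, Ω i)
    (i : ι) (a : Ω i) : tensorOp L f (update y i a) =
      ∑ x, L i (x i) a * (∏ j ∈ univ.erase i, L j (x j) (y j)) * f x := by
  simp only [tensorOp, prod_apply_update]

theorem tensorOp_eq_of_eqOn {K : ∀ i, Ω i → Ω i → ℝ} {S : Finset ι}
    (hK : ∀ i ∉ S, ∀ a b b', K i a b = K i a b') (f : (∀ i, Ω i) → ℝ) {y y' : ∀ i, Ω i}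
    (hy : ∀ i ∈ S, y i = y' i) : tensorOp K f y = tensorOp K f y' := by
  refine sum_congr rfl fun x _ => congrArg (· * f x) (prod_congr rfl fun i _ => ?_)
  by_cases hi : i ∈ S
  · rw [hy i hi]
  · exact hK i hi _ _ _

theorem coordAverage_tensorOp_eq_zero (ν : ∀ i, Ω i → ℝ) {K : ∀ i, Ω i → Ω i → ℝ} {i : ι}
    (hK : ∀ a, ∑ b, ν i b * K i a b = 0) (f : (∀ i, Ω i) → ℝ) (y : ∀ i, Ω i) :
    coordAverage ν i (tensorOp K f) y = 0 := by
  simp only [coordAverage, tensorOp_apply_update, mul_sum]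
  rw [sum_comm]
  refine sum_eq_zero fun x _ => ?_
  calc ∑ b, ν i b * (K i (x i) b * (∏ j ∈ univ.erase i, K j (x j) (y j)) * f x)
      = (∑ b, ν i b * K i (x i) b) * ((∏ j ∈ univ.erase i, K j (x j) (y j)) * f x) := by
        rw [sum_mul]
        exact sum_congr rfl fun _ _ => by ring
    _ = 0 := by rw [hK, zero_mul]

end Tensor

variable [∀ i, DecidableEq (Ω i)]

def idKernel : ∀ i, Ω i → Ω i → ℝ := fun _ a b => if a = b then 1 else 0

theorem tensorOp_idKernel (f : (∀ i, Ω i) → ℝ) : tensorOp idKernel f = f := by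
  ext y
  simp [tensorOp, idKernel, Fintype.prod_boole, ← funext_iff]

theorem coordOp_tensorOp {L : ∀ i, Ω i → Ω i → ℝ} {i : ι} (hL : L i = idKernel i)
    (k : Ω i → Ω i → ℝ) (f : (∀ i, Ω i) → ℝ) :
    coordOp i k (tensorOp L f) = tensorOp (update L i k) f := by
  ext y
  simp only [coordOp, tensorOp_apply_update, hL, idKernel, mul_sum]
  rw [sum_comm]
  refine sum_congr rfl fun x _ => ?_
  rw [prod_apply_update (fun j (M : Ω j → Ω j → ℝ) => M (x j) (y j)) L i k]
  simp [ite_mul, mul_assoc]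

section EfronStein

variable (ν : ∀ i, Ω i → ℝ)

/-- `esComponent ν S f = (∏ i ∈ S, (1 - Eᵢ)) (∏ i ∉ S, Eᵢ) f`, where `Eᵢ` averages out
coordinate `i`. -/
def esKernel (S : Finset ι) : ∀ i, Ω i → Ω i → ℝ :=
  S.piecewise (idKernel - fun i a _ => ν i a) fun i a _ => ν i a

def esComponent (S : Finset ι) (f : (∀ i, Ω i) → ℝ) : (∀ i, Ω i) → ℝ :=
  tensorOp (esKernel ν S) f

theorem sum_esComponent (f : (∀ i, Ω i) → ℝ) : ∑ S, esComponent ν S f = f := by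
  simp only [esComponent, esKernel, sum_tensorOp_piecewise, sub_add_cancel, tensorOp_idKernel]

theorem isPureOn_esComponent (hν : ∀ i, ∑ a, ν i a = 1) (S : Finset ι) (f : (∀ i, Ω i) → ℝ) :
    IsPureOn ν S (esComponent ν S f) where
  coordAverage_eq_zero i hi := coordAverage_tensorOp_eq_zero ν (fun a => by
    simp [esKernel, hi, idKernel, mul_sub, ← sum_mul, hν]) f
  eq_of_eqOn _ _ := tensorOp_eq_of_eqOn (fun i hi _ _ _ => by simp [esKernel, hi]) f

end EfronStein

section Contraction

variable {ν : ∀ i, Ω i → ℝ} {K : ∀ i, Ω i → Ω i → ℝ} {S : Finset ι} {g : (∀ i, Ω i) → ℝ}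

theorem tensorOp_piecewise_insert {i : ι} {A : Finset ι} (hi : i ∉ A) (f : (∀ i, Ω i) → ℝ) :
    tensorOp ((insert i A).piecewise K idKernel) f =
      coordOp i (K i) (tensorOp (A.piecewise K idKernel) f) := by
  rw [piecewise_insert, coordOp_tensorOp (piecewise_eq_of_notMem _ _ _ hi)]

theorem IsPureOn.tensorOp_piecewise (hK : ∀ i, IsStationaryKernel (ν i) (K i))
    (hg : IsPureOn ν S g) (A : Finset ι) :
    IsPureOn ν S (tensorOp (A.piecewise K idKernel) g) := by
  induction A using Finset.induction_on with
  | empty => simpa [tensorOp_idKernel] using hg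
  | insert i A hi ih =>
    rw [tensorOp_piecewise_insert hi]
    exact ih.coordOp (hK i)

theorem IsPureOn.wNormSq_tensorOp_piecewise_le (hν₀ : ∀ i a, 0 ≤ ν i a)
    (hν₁ : ∀ i, ∑ a, ν i a = 1) (hK : ∀ i, IsStationaryKernel (ν i) (K i)) {c : ℝ}
    (hc : 0 ≤ c) (hgap : ∀ i, HasGap (ν i) (K i) c)
    (hg : IsPureOn ν S g) (A : Finset ι) :
    wNormSq ν (tensorOp (A.piecewise K idKernel) g) ≤ c ^ (A ∩ S).card * wNormSq ν g := by
  induction A using Finset.induction_on with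
  | empty => simp [tensorOp_idKernel]
  | insert i A hi ih =>
    have hA := hg.tensorOp_piecewise hK A
    rw [tensorOp_piecewise_insert hi]
    by_cases hiS : i ∈ S
    · rw [insert_inter_of_mem hiS, card_insert_of_notMem fun h => hi (mem_inter.1 h).1, pow_succ',
        mul_assoc]
      exact (wNormSq_coordOp_le ν hν₀ (hν₁ i) (hgap i) (hA.coordAverage_eq_zero i hiS)).trans
        (mul_le_mul_of_nonneg_left ih hc)
    · rwa [insert_inter_of_notMem hiS, coordOp_eq_self (hK i).sum_eq_one (hA.update_eq hiS)]

theorem IsPureOn.wNormSq_tensorOp_le (hν₀ : ∀ i a, 0 ≤ ν i a)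
    (hν₁ : ∀ i, ∑ a, ν i a = 1) (hK : ∀ i, IsStationaryKernel (ν i) (K i)) {c : ℝ}
    (hc : 0 ≤ c) (hgap : ∀ i, HasGap (ν i) (K i) c)
    (hg : IsPureOn ν S g) : wNormSq ν (tensorOp K g) ≤ c ^ S.card * wNormSq ν g := by
  simpa using hg.wNormSq_tensorOp_piecewise_le hν₀ hν₁ hK hc hgap univ

theorem IsPureOn.tensorOp (hK : ∀ i, IsStationaryKernel (ν i) (K i)) (hg : IsPureOn ν S g) :
    IsPureOn ν S (tensorOp K g) := by
  simpa using hg.tensorOp_piecewise hK univ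

theorem wNormSq_tensorOp_le_of_orthogonal_juntas (hν₀ : ∀ i a, 0 ≤ ν i a)
    (hν₁ : ∀ i, ∑ a, ν i a = 1) (hK : ∀ i, IsStationaryKernel (ν i) (K i)) {c : ℝ}
    (hc₀ : 0 ≤ c) (hc₁ : c ≤ 1) (hgap : ∀ i, HasGap (ν i) (K i) c)
    {d : ℕ} {f : (∀ i, Ω i) → ℝ}
    (horth : ∀ h : (∀ i, Ω i) → ℝ,
      (∃ A : Finset ι, A.card ≤ d ∧ ∀ x y, (∀ i ∈ A, x i = y i) → h x = h y) →
      wInner ν f h = 0) :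
    wNormSq ν (tensorOp K f) ≤ c ^ d * wNormSq ν f := by
  have hpure S := isPureOn_esComponent ν hν₁ S f
  have hlow S (hS : S.card ≤ d) : wNormSq ν (esComponent ν S f) = 0 := by
    rw [← wInner_sum_of_isPureOn hν₁ hpure, sum_esComponent]
    exact horth _ ⟨S, hS, (hpure S).eq_of_eqOn⟩
  rw [← sum_esComponent ν f, tensorOp_sum, wNormSq_sum_of_isPureOn hν₁
    fun S => (hpure S).tensorOp hK, wNormSq_sum_of_isPureOn hν₁ hpure, mul_sum]
  refine sum_le_sum fun S _ =>
    ((hpure S).wNormSq_tensorOp_le hν₀ hν₁ hK hc₀ hgap).trans ?_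
  rcases le_or_gt S.card d with hS | hS
  · simp [hlow S hS]
  · exact mul_le_mul_of_nonneg_right (pow_le_pow_of_le_one hc₀ hc₁ hS.le)
      (wNormSq_nonneg hν₀ _)

end Contraction

end TensorMarkov

open TensorMarkov

theorem tensor_markov_contracts_high_degree_general (n : ℕ) (Ω : Fin n → Type*)
    [∀ i, Fintype (Ω i)]
    (ν : ∀ i, Ω i → ℝ) (hν : ∀ i a, 0 < ν i a) (hνsum : ∀ i, ∑ a, ν i a = 1)
    (μ : ∀ i, Ω i × Ω i → ℝ)
    (hmarg1 : ∀ i x, (∑ y, μ i (x, y)) = ν i x)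
    (hmarg2 : ∀ i y, (∑ x, μ i (x, y)) = ν i y)
    (β : ℝ) (hβ0 : 0 ≤ β) (hβ1 : β ≤ 1)
    (hgap : ∀ (i : Fin n) (g : Ω i → ℝ), (∑ a, ν i a * g a) = 0 →
      Real.sqrt (∑ b, ν i b * ((∑ a, μ i (a, b) * g a) / ν i b) ^ 2) ≤
        (1 - β) * Real.sqrt (∑ a, ν i a * g a ^ 2))
    (d : ℕ) (f : (∀ i, Ω i) → ℝ)
    (horth : ∀ h : (∀ i, Ω i) → ℝ,
      (∃ A : Finset (Fin n), A.card ≤ d ∧ ∀ x y, (∀ i ∈ A, x i = y i) → h x = h y) →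
      (∑ x, (∏ i, ν i (x i)) * f x * h x) = 0) :
    Real.sqrt (∑ y : ∀ i, Ω i, (∏ i, ν i (y i)) *
        (∑ x : ∀ i, Ω i, (∏ i, μ i (x i, y i) / ν i (y i)) * f x) ^ 2) ≤
      (1 - β) ^ d * Real.sqrt (∑ x, (∏ i, ν i (x i)) * f x ^ 2) := by
  classical
  set K : ∀ i, Ω i → Ω i → ℝ := fun i a b => μ i (a, b) / ν i b
  have hν₀ i a : 0 ≤ ν i a := (hν i a).le
  have hK i : IsStationaryKernel (ν i) (K i) :=
    ⟨fun b => by simp [K, ← sum_div, hmarg2, (hν i b).ne'],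
      fun a => by simp [K, mul_div_cancel₀ _ (hν _ _).ne', hmarg1]⟩
  have hβ : 0 ≤ 1 - β := by linarith
  have hgapK i : HasGap (ν i) (K i) ((1 - β) ^ 2) := fun g hg => by
    have hB : 0 ≤ ∑ a, ν i a * g a ^ 2 :=
      sum_nonneg fun a _ => mul_nonneg (hν₀ i a) (sq_nonneg _)
    have h := (Real.sqrt_le_iff.1 (hgap i g hg)).2
    rw [mul_pow, Real.sq_sqrt hB] at h
    simpa [K, sum_div, div_mul_eq_mul_div] using h
  have hmain := wNormSq_tensorOp_le_of_orthogonal_juntas hν₀ hνsum hK (sq_nonneg _)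
    (pow_le_one₀ hβ (by linarith)) hgapK horth
  change √(wNormSq ν (tensorOp K f)) ≤ (1 - β) ^ d * √(wNormSq ν f)
  rw [← Real.sqrt_sq (pow_nonneg hβ d), ← Real.sqrt_mul (sq_nonneg _), ← pow_mul, mul_comm d 2,
    pow_mul]
  exact Real.sqrt_le_sqrt hmain

/-- Tensor products of Markov operators with singular-value gap `1 − β` contract
functions orthogonal to all `d`-juntas by a factor `(1−β)^d`. -/
theorem tensor_markov_contracts_high_degree (n : ℕ) (Ω : Fin n → Type*)
    [∀ i, Fintype (Ω i)]
    (ν : ∀ i, Ω i → ℝ) (hν : ∀ i a, 0 < ν i a) (hνsum : ∀ i, ∑ a, ν i a = 1)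
    (μ : ∀ i, Ω i × Ω i → ℝ) (hμ0 : ∀ i z, 0 ≤ μ i z)
    (hmarg1 : ∀ i x, (∑ y, μ i (x, y)) = ν i x)
    (hmarg2 : ∀ i y, (∑ x, μ i (x, y)) = ν i y)
    (β : ℝ) (hβ0 : 0 ≤ β) (hβ1 : β ≤ 1)
    (hgap : ∀ (i : Fin n) (g : Ω i → ℝ), (∑ a, ν i a * g a) = 0 →
      Real.sqrt (∑ b, ν i b * ((∑ a, μ i (a, b) * g a) / ν i b) ^ 2) ≤
        (1 - β) * Real.sqrt (∑ a, ν i a * g a ^ 2))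
    (d : ℕ) (f : (∀ i, Ω i) → ℝ)
    (horth : ∀ h : (∀ i, Ω i) → ℝ,
      (∃ A : Finset (Fin n), A.card ≤ d ∧ ∀ x y, (∀ i ∈ A, x i = y i) → h x = h y) →
      (∑ x, (∏ i, ν i (x i)) * f x * h x) = 0) :
    Real.sqrt (∑ y : ∀ i, Ω i, (∏ i, ν i (y i)) *
        (∑ x : ∀ i, Ω i, (∏ i, μ i (x i, y i) / ν i (y i)) * f x) ^ 2) ≤
      (1 - β) ^ d * Real.sqrt (∑ x, (∏ i, ν i (x i)) * f x ^ 2) :=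
  tensor_markov_contracts_high_degree_general n Ω ν hν hνsum μ hmarg1 hmarg2 β hβ0 hβ1 hgap d f
    horth
end
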